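/- arXiv:2008.03941 — 4 statements merged into one kernel-verified Lean document; each statement's English description precedes it below -/
import Mathlib

section
/- If the column rank of H equals L (so L ≤ N), then there exists a global minimizer θ̂ of the LAV objective F for which the set {i ∈ {1,…,M} : z_i = h_i·θ̂} of measurements satisfied exactly (with zero residual) has cardinality at least L. -/
open Matrix Finset

lemma key_abs (a b : ℝ) (h : |b| ≤ |a|) : |a - b| + |a + b| = 2 * |a| := by
  rcases abs_le.mp h with ⟨h1, h2⟩
  rcases le_or_gt 0 a with ha | ha
  · rw [abs_of_nonneg ha] at h1 h2
    rw [abs_of_nonneg ha, abs_of_nonneg (by linarith), abs_of_nonneg (by linarith)]; ring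
  · rw [abs_of_neg ha] at h1 h2
    rw [abs_of_neg ha, abs_of_nonpos (by linarith), abs_of_nonpos (by linarith)]; ring

lemma move {M N : ℕ} (H : Matrix (Fin M) (Fin N) ℝ) (z : Fin M → ℝ) (θ : Fin N → ℝ)
    (hmin : ∀ θ', (∑ i, |z i - H i ⬝ᵥ θ|) ≤ ∑ i, |z i - H i ⬝ᵥ θ'|)
    (w : Fin N → ℝ) (hw0 : ∀ i, z i = H i ⬝ᵥ θ → H i ⬝ᵥ w = 0)
    (hw : H.mulVec w ≠ 0) :
    ∃ θ' : Fin N → ℝ, (∀ θ'', (∑ i, |z i - H i ⬝ᵥ θ'|) ≤ ∑ i, |z i - H i ⬝ᵥ θ''|) ∧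
      {i : Fin M | z i = H i ⬝ᵥ θ} ⊂ {i : Fin M | z i = H i ⬝ᵥ θ'} := by
  classical
  set c : Fin M → ℝ := fun i => H i ⬝ᵥ w with hc
  set r : Fin M → ℝ := fun i => z i - H i ⬝ᵥ θ with hr
  have hBne : (Finset.univ.filter fun i => c i ≠ 0).Nonempty := by
    by_contra hB
    apply hw
    funext i
    rw [Finset.not_nonempty_iff_eq_empty, Finset.filter_eq_empty_iff] at hB
    have := hB (Finset.mem_univ i)
    push_neg at this
    simpa [Matrix.mulVec] using this
  obtain ⟨i₀, hi₀B, hi₀min⟩ := Finset.exists_min_image _ (fun i => |r i / c i|) hBne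
  have hci₀ : c i₀ ≠ 0 := (Finset.mem_filter.mp hi₀B).2
  set s : ℝ := r i₀ / c i₀ with hs
  -- key bound
  have hkey : ∀ i, |s * c i| ≤ |r i| := by
    intro i
    by_cases hci : c i = 0
    · simp [hci]
    · have := hi₀min i (Finset.mem_filter.mpr ⟨Finset.mem_univ i, hci⟩)
      calc |s * c i| = |s| * |c i| := abs_mul _ _
        _ ≤ |r i / c i| * |c i| := by
            apply mul_le_mul_of_nonneg_right this (abs_nonneg _)
        _ = |r i| := by rw [abs_div, div_mul_cancel₀ _ (abs_ne_zero.mpr hci)]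
  have hdot : ∀ (i : Fin M) (t : ℝ), H i ⬝ᵥ (θ + t • w) = H i ⬝ᵥ θ + t * c i := by
    intro i t
    simp [dotProduct_add, dotProduct_smul, hc, smul_eq_mul]
  -- the two perturbed values
  have hsum : (∑ i, |z i - H i ⬝ᵥ (θ + s • w)|) + (∑ i, |z i - H i ⬝ᵥ (θ + (-s) • w)|)
      = 2 * ∑ i, |z i - H i ⬝ᵥ θ| := by
    rw [← Finset.sum_add_distrib, Finset.mul_sum]
    apply Finset.sum_congr rfl
    intro i _
    rw [hdot, hdot]
    have : z i - (H i ⬝ᵥ θ + s * c i) = r i - s * c i := by rw [hr]; ring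
    have h2 : z i - (H i ⬝ᵥ θ + (-s) * c i) = r i + s * c i := by rw [hr]; ring
    rw [this, h2]
    have h3 : z i - H i ⬝ᵥ θ = r i := by rw [hr]
    rw [h3]
    exact key_abs (r i) (s * c i) (hkey i)
  have hmin1 := hmin (θ + s • w)
  have hmin2 := hmin (θ + (-s) • w)
  have heq : (∑ i, |z i - H i ⬝ᵥ (θ + s • w)|) = ∑ i, |z i - H i ⬝ᵥ θ| := by linarith
  refine ⟨θ + s • w, fun θ'' => heq ▸ hmin θ'', ?_⟩
  constructor
  · intro i hi
    have hz : z i = H i ⬝ᵥ θ := hi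
    have : c i = 0 := hw0 i hz
    show z i = H i ⬝ᵥ (θ + s • w)
    rw [hdot, this]
    simpa using hz
  · intro hsub
    have hi₀new : z i₀ = H i₀ ⬝ᵥ (θ + s • w) := by
      rw [hdot, hs]
      have : r i₀ / c i₀ * c i₀ = r i₀ := div_mul_cancel₀ _ hci₀
      rw [this, hr]
      ring_nf
    have hi₀old : z i₀ = H i₀ ⬝ᵥ θ := hsub hi₀new
    exact hci₀ (hw0 i₀ hi₀old)


lemma exists_w {M N L : ℕ} (H : Matrix (Fin M) (Fin N) ℝ) (hrank : H.rank = L)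
    (A : Finset (Fin M)) (hA : A.card < L) :
    ∃ w : Fin N → ℝ, (∀ i ∈ A, H i ⬝ᵥ w = 0) ∧ H.mulVec w ≠ 0 := by
  by_contra hc
  push_neg at hc
  set φ : (Fin N → ℝ) →ₗ[ℝ] (A → ℝ) :=
    LinearMap.pi (fun i => (LinearMap.proj (i : Fin M)).comp H.mulVecLin) with hφ
  have hker : LinearMap.ker φ ≤ LinearMap.ker H.mulVecLin := by
    intro w hwk
    rw [LinearMap.mem_ker] at hwk ⊢
    rw [Matrix.mulVecLin_apply]
    apply hc
    intro i hi
    have := congrFun hwk ⟨i, hi⟩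
    simpa [hφ, Matrix.mulVecLin_apply, Matrix.mulVec] using this
  have h1 := LinearMap.finrank_range_add_finrank_ker H.mulVecLin
  have h2 := LinearMap.finrank_range_add_finrank_ker φ
  have h3 : Module.finrank ℝ (LinearMap.ker φ) ≤ Module.finrank ℝ (LinearMap.ker H.mulVecLin) :=
    Submodule.finrank_mono hker
  have h4 : Module.finrank ℝ (LinearMap.range φ) ≤ Module.finrank ℝ (A → ℝ) :=
    (LinearMap.range φ).finrank_le
  have h5 : Module.finrank ℝ (A → ℝ) = A.card := by
    rw [Module.finrank_pi, Fintype.card_coe]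
  have h6 : H.rank = Module.finrank ℝ (LinearMap.range H.mulVecLin) := rfl
  omega

lemma exists_min {M N : ℕ} (H : Matrix (Fin M) (Fin N) ℝ) (z : Fin M → ℝ) :
    ∃ θ₀ : Fin N → ℝ, ∀ θ, (∑ i, |z i - H i ⬝ᵥ θ₀|) ≤ ∑ i, |z i - H i ⬝ᵥ θ| := by
  set V := LinearMap.range H.mulVecLin with hV
  set g : V → ℝ := fun y => ∑ i, |z i - (y : Fin M → ℝ) i| with hg
  have hcont : Continuous g := by
    apply continuous_finset_sum
    intro i _
    exact (continuous_const.sub ((continuous_apply i).comp continuous_subtype_val)).abs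
  have hcoer : ∀ y : V, ‖y‖ - (∑ i, |z i|) ≤ g y := by
    intro y
    have h1 : ‖y‖ ≤ ∑ i, |(y : Fin M → ℝ) i| := by
      rcases isEmpty_or_nonempty (Fin M) with hM | hM
      · simp [Subsingleton.elim (y : Fin M → ℝ) 0]

      apply (pi_norm_le_iff_of_nonneg (Finset.sum_nonneg fun i _ => abs_nonneg _)).mpr
      intro i
      exact Finset.single_le_sum (f := fun j => |(y : Fin M → ℝ) j|) (fun j _ => abs_nonneg _) (Finset.mem_univ i)
    have h2 : ∑ i, |(y : Fin M → ℝ) i| - (∑ i, |z i|) ≤ g y := by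
      rw [hg, ← Finset.sum_sub_distrib]
      apply Finset.sum_le_sum
      intro i _
      have := abs_sub_abs_le_abs_sub ((y : Fin M → ℝ) i) (z i)
      rw [abs_sub_comm] at this
      linarith
    linarith
  have htend : Filter.Tendsto g (Filter.cocompact V) Filter.atTop := by
    apply Filter.tendsto_atTop_mono hcoer
    have := Filter.tendsto_atTop_add_const_right (Filter.cocompact V) (-(∑ i, |z i|))
      (tendsto_norm_cocompact_atTop (E := V))
    simpa [sub_eq_add_neg] using this
  obtain ⟨y₀, hy₀⟩ := hcont.exists_forall_le htend
  obtain ⟨θ₀, hθ₀⟩ := y₀.2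
  refine ⟨θ₀, fun θ => ?_⟩
  have := hy₀ ⟨H.mulVec θ, ⟨θ, by simp [Matrix.mulVecLin_apply]⟩⟩
  simp only [hg] at this
  have e1 : ∀ i, (y₀ : Fin M → ℝ) i = H i ⬝ᵥ θ₀ := by
    intro i
    rw [← hθ₀]
    simp [Matrix.mulVecLin_apply, Matrix.mulVec]
  simpa [e1, Matrix.mulVec, Matrix.mulVecLin_apply] using this

/-- Theorem 1: if the column rank of `H` equals `L`, then there is a global minimizer
of the LAV objective satisfying at least `L` measurements exactly (zero residual). -/
theorem lav_min_satisfies_rank_many_measurements {M N L : ℕ} (hM : 0 < M) (hN : 0 < N)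
    (H : Matrix (Fin M) (Fin N) ℝ) (z : Fin M → ℝ)
    (hrank : H.rank = L) :
    ∃ θhat : Fin N → ℝ,
      (∀ θ : Fin N → ℝ, (∑ i, |z i - H i ⬝ᵥ θhat|) ≤ ∑ i, |z i - H i ⬝ᵥ θ|) ∧
      L ≤ {i : Fin M | z i = H i ⬝ᵥ θhat}.ncard := by
  classical
  obtain ⟨θ₀, hθ₀⟩ := exists_min H z
  suffices h : ∀ n : ℕ, ∀ θ : Fin N → ℝ,
      (∀ θ', (∑ i, |z i - H i ⬝ᵥ θ|) ≤ ∑ i, |z i - H i ⬝ᵥ θ'|) →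
      L ≤ {i : Fin M | z i = H i ⬝ᵥ θ}.ncard + n →
      ∃ θhat : Fin N → ℝ,
        (∀ θ', (∑ i, |z i - H i ⬝ᵥ θhat|) ≤ ∑ i, |z i - H i ⬝ᵥ θ'|) ∧
        L ≤ {i : Fin M | z i = H i ⬝ᵥ θhat}.ncard by
    exact h L θ₀ hθ₀ (Nat.le_add_left L _)
  intro n
  induction n with
  | zero =>
    intro θ hm hL
    exact ⟨θ, hm, by simpa using hL⟩
  | succ n ih =>
    intro θ hm hL
    by_cases hcase : L ≤ {i : Fin M | z i = H i ⬝ᵥ θ}.ncard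
    · exact ⟨θ, hm, hcase⟩
    · push_neg at hcase
      have hfin : {i : Fin M | z i = H i ⬝ᵥ θ}.Finite := Set.toFinite _
      have hcard : {i : Fin M | z i = H i ⬝ᵥ θ}.ncard = hfin.toFinset.card :=
        Set.ncard_eq_toFinset_card _ hfin
      obtain ⟨w, hw0, hw⟩ := exists_w H hrank hfin.toFinset (by omega)
      obtain ⟨θ', hθ'min, hss⟩ :=
        move H z θ hm w (fun i hi => hw0 i (hfin.mem_toFinset.mpr hi)) hw
      have hlt : {i : Fin M | z i = H i ⬝ᵥ θ}.ncard < {i : Fin M | z i = H i ⬝ᵥ θ'}.ncard :=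
        Set.ncard_lt_ncard hss (Set.toFinite _)
      exact ih θ' hθ'min (by omega)
end

section
/- If M ≥ N and H has full column rank N, then there exists a global minimizer θ̂ of the LAV objective F such that at least N of the M residuals vanish, i.e., the set {i ∈ {1,…,M} : z_i = h_i·θ̂} has cardinality at least N. -/
/-!
Minimizers exist: a LAV fit is a point of the column space of `H` nearest to `z` in the `ℓ¹`
distance. Among them take one, `θ`, with the largest number of vanishing residuals. If fewer than
`N` vanish, some `d ≠ 0` is annihilated by every row with vanishing residual, and `H d ≠ 0` by full
column rank. Along `θ + t d` no residual changes sign until the first new one vanishes, so there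
the objective is affine in `t`; minimality at `t = 0` forces its slope to be zero. Moving to that
first new zero therefore gives a minimizer with strictly more vanishing residuals.
-/

open Finset Matrix

lemma abs_sub_mul_eq_of_abs_mul_le {r a t : ℝ} (h : |t| * |a| ≤ |r|) :
    |r - t * a| = |r| - t * (Real.sign r * a) := by
  obtain ⟨hlow, hupp⟩ := abs_le.mp ((abs_mul t a).trans_le h)
  rcases lt_trichotomy r 0 with hr | rfl | hr
  · rw [abs_of_neg hr] at hlow hupp ⊢
    rw [Real.sign_of_neg hr, abs_of_nonpos (by linarith)]
    ring
  · rw [abs_zero] at hlow hupp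
    simp [show t * a = 0 by linarith]
  · rw [abs_of_pos hr] at hlow hupp ⊢
    rw [Real.sign_of_pos hr, abs_of_nonneg (by linarith)]
    ring

lemma sum_abs_sub_mul_eq_of_forall_abs_mul_le {ι : Type*} [Fintype ι] {r a : ι → ℝ} {t : ℝ}
    (h : ∀ i, |t| * |a i| ≤ |r i|) :
    ∑ i, |r i - t * a i| = ∑ i, |r i| - t * ∑ i, Real.sign (r i) * a i := by
  rw [mul_sum, ← sum_sub_distrib]
  exact sum_congr rfl fun i _ => abs_sub_mul_eq_of_abs_mul_le (h i)

lemma exists_sum_abs_sub_mul_eq_and_zeros_ssubset {ι : Type*} [Fintype ι] {r a : ι → ℝ}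
    (hmin : ∀ t : ℝ, ∑ i, |r i| ≤ ∑ i, |r i - t * a i|)
    (hzero : ∀ i, r i = 0 → a i = 0) (ha : a ≠ 0) :
    ∃ t, ∑ i, |r i - t * a i| = ∑ i, |r i| ∧ {i | r i = 0} ⊂ {i | r i - t * a i = 0} := by
  classical
  obtain ⟨j, hj⟩ := Function.ne_iff.mp ha
  obtain ⟨i₀, hi₀, hi₀_min⟩ := (univ.filter fun i => a i ≠ 0).exists_min_image
    (fun i => |r i| / |a i|) ⟨j, by simpa using hj⟩
  have ha₀ : a i₀ ≠ 0 := (mem_filter.mp hi₀).2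
  have hr₀ : r i₀ ≠ 0 := fun h => ha₀ (hzero i₀ h)
  set ε := |r i₀| / |a i₀|
  have hε : 0 < ε := by positivity
  -- For `|t| ≤ ε` no residual changes sign, so the objective is affine in `t`.
  have haffine : ∀ t, |t| ≤ ε →
      ∑ i, |r i - t * a i| = ∑ i, |r i| - t * ∑ i, Real.sign (r i) * a i := by
    refine fun t ht => sum_abs_sub_mul_eq_of_forall_abs_mul_le fun i => ?_
    by_cases hai : a i = 0
    · simp [hai]
    · calc |t| * |a i| ≤ |r i| / |a i| * |a i| := by
            gcongr; exact ht.trans (hi₀_min i (by simp [hai]))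
        _ = |r i| := div_mul_cancel₀ _ (abs_ne_zero.mpr hai)
  have hslope : ∑ i, Real.sign (r i) * a i = 0 := by
    have h₁ := haffine ε (abs_of_pos hε).le ▸ hmin ε
    have h₂ := haffine (-ε) (by rw [abs_neg, abs_of_pos hε]) ▸ hmin (-ε)
    exact (mul_eq_zero.mp (by linarith : ε * _ = 0)).resolve_left hε.ne'
  refine ⟨r i₀ / a i₀, ?_, ?_⟩
  · rw [haffine _ (abs_div _ _).le, hslope, mul_zero, sub_zero]
  · refine (Set.ssubset_iff_of_subset fun i (hi : r i = 0) => ?_).mpr ⟨i₀, ?_, hr₀⟩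
    · simp [hi, hzero i hi]
    · simp [div_mul_cancel₀ _ ha₀]

namespace Matrix

variable {K m n : Type*} [Field K] [Fintype n]

lemma exists_ne_zero_forall_mulVec_eq_zero_of_ncard_lt [Fintype m] (H : Matrix m n K)
    {s : Set m} (hs : s.ncard < Fintype.card n) : ∃ d ≠ 0, ∀ i ∈ s, (H *ᵥ d) i = 0 := by
  let rows : (n → K) →ₗ[K] (s → K) := (H.submatrix ((↑) : s → m) id).mulVecLin
  have hker : LinearMap.ker rows ≠ ⊥ := LinearMap.ker_ne_bot_of_finrank_lt <| by
    classical
    simpa [← Nat.card_coe_set_eq, Nat.card_eq_fintype_card] using hs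
  obtain ⟨d, hd, hd0⟩ := Submodule.exists_mem_ne_zero_of_ne_bot hker
  exact ⟨d, hd0, fun i hi => congrFun hd ⟨i, hi⟩⟩

lemma mulVec_injective_of_rank_eq_card (H : Matrix m n K) (h : H.rank = Fintype.card n) :
    Function.Injective H.mulVec := by
  have := LinearMap.finrank_range_add_finrank_ker H.mulVecLin
  rw [← coe_mulVecLin, ← LinearMap.ker_eq_bot, ← Submodule.finrank_eq_zero (R := K)]
  rw [← rank, h, Module.finrank_fintype_fun_eq_card] at this
  omega

end Matrix

section LAV

variable {m n : Type*} [Fintype m] [Fintype n]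

def lavObjective (H : Matrix m n ℝ) (z : m → ℝ) (θ : n → ℝ) : ℝ :=
  ∑ i, |z i - (H *ᵥ θ) i|

def IsLAVMinimizer (H : Matrix m n ℝ) (z : m → ℝ) (θ : n → ℝ) : Prop :=
  ∀ θ', lavObjective H z θ ≤ lavObjective H z θ'

def zeroResiduals (H : Matrix m n ℝ) (z : m → ℝ) (θ : n → ℝ) : Set m :=
  {i | z i = (H *ᵥ θ) i}

lemma exists_isLAVMinimizer (H : Matrix m n ℝ) (z : m → ℝ) : ∃ θ, IsLAVMinimizer H z θ := by
  let L : (n → ℝ) →ₗ[ℝ] PiLp 1 fun _ : m => ℝ :=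
    (WithLp.linearEquiv 1 ℝ (m → ℝ)).symm.toLinearMap ∘ₗ H.mulVecLin
  let K := LinearMap.range L
  obtain ⟨_, ⟨θ, rfl⟩, hdist⟩ :=
    K.closed_of_finiteDimensional.exists_infDist_eq_dist ⟨0, K.zero_mem⟩ (WithLp.toLp 1 z)
  refine ⟨θ, fun θ' => ?_⟩
  have := Metric.infDist_le_dist_of_mem (x := WithLp.toLp 1 z) (LinearMap.mem_range_self L θ')
  rw [hdist] at this
  simpa [L, PiLp.dist_eq_of_L1, Real.dist_eq, lavObjective] using this

lemma exists_isLAVMinimizer_forall_ncard_le (H : Matrix m n ℝ) (z : m → ℝ) :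
    ∃ θ, IsLAVMinimizer H z θ ∧ ∀ θ', IsLAVMinimizer H z θ' →
      (zeroResiduals H z θ').ncard ≤ (zeroResiduals H z θ).ncard := by
  let counts : Set ℕ := {k | ∃ θ, IsLAVMinimizer H z θ ∧ (zeroResiduals H z θ).ncard = k}
  have hne : counts.Nonempty :=
    let ⟨θ, hθ⟩ := exists_isLAVMinimizer H z; ⟨_, θ, hθ, rfl⟩
  have hbdd : BddAbove counts :=
    ⟨Nat.card m, fun _ ⟨θ, _, hk⟩ => hk ▸ Set.ncard_le_card _⟩
  obtain ⟨θ, hθ, hk⟩ := Nat.sSup_mem hne hbdd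
  exact ⟨θ, hθ, fun θ' hθ' => hk ▸ le_csSup hbdd ⟨θ', hθ', rfl⟩⟩

lemma exists_isLAVMinimizer_zeroResiduals_ssubset {H : Matrix m n ℝ} {z : m → ℝ} {θ : n → ℝ}
    (hH : Function.Injective H.mulVec) (hθ : IsLAVMinimizer H z θ)
    (hcard : (zeroResiduals H z θ).ncard < Fintype.card n) :
    ∃ θ', IsLAVMinimizer H z θ' ∧ zeroResiduals H z θ ⊂ zeroResiduals H z θ' := by
  obtain ⟨d, hd0, hd⟩ := H.exists_ne_zero_forall_mulVec_eq_zero_of_ncard_lt hcard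
  have hresidual (t : ℝ) (i : m) :
      z i - (H *ᵥ (θ + t • d)) i = (z - H *ᵥ θ) i - t * (H *ᵥ d) i := by
    simp only [mulVec_add, mulVec_smul, Pi.add_apply, Pi.smul_apply, Pi.sub_apply, smul_eq_mul]
    ring
  have hzeros (θ : n → ℝ) : zeroResiduals H z θ = {i | (z - H *ᵥ θ) i = 0} :=
    Set.ext fun _ => sub_eq_zero.symm
  obtain ⟨t, ht, hss⟩ :=
    exists_sum_abs_sub_mul_eq_and_zeros_ssubset (r := z - H *ᵥ θ) (a := H *ᵥ d)
      (fun t => by simpa [lavObjective, hresidual] using hθ (θ + t • d))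
      (fun i hi => hd i (sub_eq_zero.mp hi))
      (fun h => hd0 (hH (h.trans (mulVec_zero H).symm)))
  refine ⟨θ + t • d, fun θ' => ?_, ?_⟩
  · have hobj : lavObjective H z (θ + t • d) = lavObjective H z θ := by
      simpa [lavObjective, hresidual] using ht
    exact hobj ▸ hθ θ'
  · simpa [hzeros, hresidual] using hss

end LAV

theorem lav_min_full_rank_satisfies_N_measurements_general {M N : ℕ} (H : Matrix (Fin M) (Fin N) ℝ)
    (z : Fin M → ℝ) (hrank : H.rank = N) :
    ∃ θhat : Fin N → ℝ,
      (∀ θ : Fin N → ℝ, (∑ i, |z i - H i ⬝ᵥ θhat|) ≤ ∑ i, |z i - H i ⬝ᵥ θ|) ∧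
      N ≤ {i : Fin M | z i = H i ⬝ᵥ θhat}.ncard := by
  have hH : Function.Injective H.mulVec :=
    H.mulVec_injective_of_rank_eq_card (by rw [hrank, Fintype.card_fin])
  obtain ⟨θ, hθ, hmax⟩ := exists_isLAVMinimizer_forall_ncard_le H z
  refine ⟨θ, hθ, ?_⟩
  by_contra! hlt
  obtain ⟨θ', hθ', hss⟩ :=
    exists_isLAVMinimizer_zeroResiduals_ssubset hH hθ (by rwa [Fintype.card_fin])
  exact (Set.ncard_lt_ncard hss).not_ge (hmax θ' hθ')

/-- If `M ≥ N` and `H` has full column rank `N`, then there is a global minimizer of the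
LAV objective at which at least `N` of the `M` residuals vanish. -/
theorem lav_min_full_rank_satisfies_N_measurements {M N : ℕ} (hM : 0 < M) (hN : 0 < N)
    (hMN : N ≤ M) (H : Matrix (Fin M) (Fin N) ℝ) (z : Fin M → ℝ)
    (hrank : H.rank = N) :
    ∃ θhat : Fin N → ℝ,
      (∀ θ : Fin N → ℝ, (∑ i, |z i - H i ⬝ᵥ θhat|) ≤ ∑ i, |z i - H i ⬝ᵥ θ|) ∧
      N ≤ {i : Fin M | z i = H i ⬝ᵥ θhat}.ncard :=
  lav_min_full_rank_satisfies_N_measurements_general H z hrank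
end

section
/- In the single-leverage-point scenario, set Δθ = θ_true − θ_err. If the erroneous state θ_err achieves an LAV objective value no larger than the true state, i.e., F(θ_err) ≤ F(θ_true), then Σ_{i≠j} |h_i·Δθ| ≤ |h_j·Δθ|. -/
open Matrix Finset

/-- Single-leverage-point scenario: if the erroneous state achieves an LAV objective
value no larger than the true state, then `∑_{i≠j} |h i ⬝ᵥ Δθ| ≤ |h j ⬝ᵥ Δθ|`. -/
theorem lav_leverage_inequality {M N : ℕ} (hM : 0 < M) (hN : 0 < N)
    (H : Matrix (Fin M) (Fin N) ℝ) (j : Fin M)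
    (θtrue θerr : Fin N → ℝ) (z : Fin M → ℝ)
    (hz : ∀ i, i ≠ j → z i = H i ⬝ᵥ θtrue)
    (hzj : z j = H j ⬝ᵥ θerr)
    (hle : (∑ i, |z i - H i ⬝ᵥ θerr|) ≤ ∑ i, |z i - H i ⬝ᵥ θtrue|) :
    (∑ i ∈ Finset.univ.erase j, |H i ⬝ᵥ (θtrue - θerr)|) ≤ |H j ⬝ᵥ (θtrue - θerr)| := by
  have h1 : (∑ i, |z i - H i ⬝ᵥ θerr|) =
      ∑ i ∈ Finset.univ.erase j, |H i ⬝ᵥ (θtrue - θerr)| := by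
    rw [← Finset.add_sum_erase _ _ (Finset.mem_univ j)]
    rw [hzj, sub_self, abs_zero]
    rw [zero_add]
    refine Finset.sum_congr rfl fun i hi => ?_
    rw [hz i (Finset.ne_of_mem_erase hi), dotProduct_sub]
  have h2 : (∑ i, |z i - H i ⬝ᵥ θtrue|) = |H j ⬝ᵥ (θtrue - θerr)| := by
    rw [← Finset.add_sum_erase _ _ (Finset.mem_univ j)]
    rw [Finset.sum_eq_zero (fun i hi => by
      rw [hz i (Finset.ne_of_mem_erase hi), sub_self, abs_zero]), add_zero,
      hzj, dotProduct_sub, abs_sub_comm]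
  rw [h1, h2] at hle
  exact hle
end

section
/- Lemma 1 (identifiability of leverage points for the LAV estimator): In the single-leverage-point scenario with Δθ = θ_true − θ_err ≠ 0, suppose θ_err is a global minimizer of F and suppose there exist N − 1 indices i₁,…,i_{N−1}, all distinct from j, such that the rows h_{i₁},…,h_{i_{N−1}} are linearly independent and each satisfies h_{i_k}·Δθ = 0. Then there exists a unit vector v ∈ ℝ^N orthogonal to all of h_{i₁},…,h_{i_{N−1}} (i.e., v completes the basis formed by these N − 1 rows) such that Σ_{i≠j} |h_i·v| ≤ |h_j·v|. -/
open Finset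
open scoped RealInnerProductSpace

/-- Lemma 1 (identifiability of leverage points for the LAV estimator): in the
single-leverage-point scenario, if `θ_err` is a global minimizer of the LAV objective,
`Δθ = θ_true − θ_err ≠ 0`, and there are `N − 1` linearly independent rows with indices
distinct from `j` that are all orthogonal to `Δθ`, then there exists a unit vector `v`
completing the basis formed by these rows (i.e. orthogonal to all of them) such that
`∑_{i≠j} |⟪h i, v⟫| ≤ |⟪h j, v⟫|`. -/
theorem lav_leverage_point_identifiability {M N : ℕ} (hM : 0 < M) (hN : 0 < N)
    (hMN : N ≤ M)
    (h : Fin M → EuclideanSpace ℝ (Fin N)) (j : Fin M)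
    (θtrue θerr : EuclideanSpace ℝ (Fin N)) (z : Fin M → ℝ)
    (hz : ∀ i, i ≠ j → z i = ⟪h i, θtrue⟫)
    (hzj : z j = ⟪h j, θerr⟫)
    (hΔ : θtrue - θerr ≠ 0)
    (hmin : ∀ θ : EuclideanSpace ℝ (Fin N),
      (∑ i, |z i - ⟪h i, θerr⟫|) ≤ ∑ i, |z i - ⟪h i, θ⟫|)
    (idx : Fin (N - 1) → Fin M) (hinj : Function.Injective idx)
    (hne : ∀ k, idx k ≠ j)
    (hli : LinearIndependent ℝ (fun k => h (idx k)))
    (horth : ∀ k, ⟪h (idx k), θtrue - θerr⟫ = 0) :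
    ∃ v : EuclideanSpace ℝ (Fin N), ‖v‖ = 1 ∧ (∀ k, ⟪h (idx k), v⟫ = 0) ∧
      (∑ i ∈ Finset.univ.erase j, |⟪h i, v⟫|) ≤ |⟪h j, v⟫| := by
  set Δ := θtrue - θerr with hΔdef
  have hnorm : ‖Δ‖ ≠ 0 := norm_ne_zero_iff.mpr hΔ
  have hnn : (0:ℝ) ≤ ‖Δ‖⁻¹ := inv_nonneg.mpr (norm_nonneg Δ)
  have main : (∑ i ∈ Finset.univ.erase j, |⟪h i, Δ⟫|) ≤ |⟪h j, Δ⟫| := by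
    have key := hmin θtrue
    have e1 : ∑ i, |z i - ⟪h i, θtrue⟫| = |⟪h j, Δ⟫| := by
      rw [← Finset.add_sum_erase _ _ (Finset.mem_univ j)]
      have hz0 : ∀ i ∈ Finset.univ.erase j, |z i - ⟪h i, θtrue⟫| = 0 := by
        intro i hi
        rw [hz i (Finset.ne_of_mem_erase hi), sub_self, abs_zero]
      rw [Finset.sum_eq_zero hz0, add_zero, hzj,
        show ⟪h j, θerr⟫ - ⟪h j, θtrue⟫ = -⟪h j, Δ⟫ by
          rw [hΔdef, inner_sub_right]; ring, abs_neg]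
    have e2 : ∑ i, |z i - ⟪h i, θerr⟫| = ∑ i ∈ Finset.univ.erase j, |⟪h i, Δ⟫| := by
      rw [← Finset.add_sum_erase _ _ (Finset.mem_univ j), hzj, sub_self, abs_zero, zero_add]
      refine Finset.sum_congr rfl fun i hi => ?_
      rw [hz i (Finset.ne_of_mem_erase hi), hΔdef, inner_sub_right]
    rw [e1, e2] at key
    exact key
  refine ⟨‖Δ‖⁻¹ • Δ, ?_, ?_, ?_⟩
  · rw [norm_smul, norm_inv, norm_norm, inv_mul_cancel₀ hnorm]
  · intro k
    rw [real_inner_smul_right, horth k, mul_zero]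
  · have habs : ∀ i : Fin M, |⟪h i, ‖Δ‖⁻¹ • Δ⟫| = ‖Δ‖⁻¹ * |⟪h i, Δ⟫| := by
      intro i
      rw [real_inner_smul_right, abs_mul, abs_of_nonneg hnn]
    simp only [habs, ← Finset.mul_sum]
    exact mul_le_mul_of_nonneg_left main hnn
end
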